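/- Let r₁ ∈ (0,1) be the unique positive root of −(1/r)log(1+r) + ((−r − log(1−r))/(2r))·(−(1/r)log(1−r) + (1/r)log(1+r) + 2/(1+r)) + 2(r²/(1−r) + r + 2 + (2/r)log(1−r)) = 0. Then for every r with r₁ < r < 1 there exists a ∈ (0,1) such that the function f_a(z) = (a+z)/(1+az), whose Taylor coefficients are a₀ = a and a_k = (1−a²)(−a)^{k−1} for k ≥ 1, satisfies |Cf_a(r)| + |Cf_a′(r)|·φ₁(r) + Σ_{k=2}^∞ |a_k| φ_k(r) > (1/r) log(1/(1−r)). Hence the radius r₁ in the improved Bohr inequality for the Cesàro operator is best possible. -/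

import Mathlib

open Set Metric

/-- The Cesàro operator: `Cf(z) = ∫₀¹ f(tz)/(1 - tz) dt`. -/
noncomputable def cesaro (f : ℂ → ℂ) (z : ℂ) : ℂ :=
  ∫ t in (0:ℝ)..1, f ((t : ℂ) * z) / (1 - (t : ℂ) * z)

/-- `φ_k(r) = Σ_{i=k}^∞ r^i/(i+1)`. -/
noncomputable def phi (k : ℕ) (r : ℝ) : ℝ :=
  ∑' i : ℕ, r ^ (k + i) / (k + i + 1)

lemma term_le {r : ℝ} (hr0 : 0 ≤ r) (k i : ℕ) :
    r ^ (k + i) / (k + i + 1) ≤ r ^ k * r ^ i := by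
  rw [pow_add]
  apply div_le_self (by positivity)
  have : (0:ℝ) ≤ (k:ℝ) + i := by positivity
  linarith

lemma summable_phi {r : ℝ} (hr0 : 0 ≤ r) (hr1 : r < 1) (k : ℕ) :
    Summable (fun i : ℕ => r ^ (k + i) / (k + i + 1)) :=
  Summable.of_nonneg_of_le (fun i => by positivity) (fun i => term_le hr0 k i)
    ((summable_geometric_of_lt_one hr0 hr1).mul_left (r ^ k))

lemma phi_hasSum {r : ℝ} (hr0 : 0 ≤ r) (hr1 : r < 1) (k : ℕ) :
    HasSum (fun i : ℕ => r ^ (k + i) / (k + i + 1)) (phi k r) :=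
  (summable_phi hr0 hr1 k).hasSum

lemma phi_nonneg {r : ℝ} (hr0 : 0 ≤ r) (k : ℕ) : 0 ≤ phi k r :=
  tsum_nonneg (fun i => by positivity)

lemma phi_le {r : ℝ} (hr0 : 0 ≤ r) (hr1 : r < 1) (k : ℕ) :
    phi k r ≤ r ^ k / (1 - r) := by
  have h := Summable.tsum_le_tsum (f := fun i : ℕ => r ^ (k + i) / (k + i + 1))
    (g := fun i : ℕ => r ^ k * r ^ i) (fun i => term_le hr0 k i) (summable_phi hr0 hr1 k)
    ((summable_geometric_of_lt_one hr0 hr1).mul_left (r ^ k))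
  rw [tsum_mul_left, tsum_geometric_of_lt_one hr0 hr1] at h
  rw [div_eq_mul_inv]
  exact h

lemma phi_one_eq {r : ℝ} (hr0 : 0 < r) (hr1 : r < 1) :
    phi 1 r = (-r - Real.log (1 - r)) / r := by
  have hlog := Real.hasSum_pow_div_log_of_abs_lt_one (x := r) (by rw [abs_of_pos hr0]; exact hr1)
  have h1 : HasSum (fun n : ℕ => r ^ (n + 1 + 1) / ((n:ℝ) + 1 + 1)) (-Real.log (1 - r) - r) := by
    have := (hasSum_nat_add_iff (f := fun n : ℕ => r ^ (n + 1) / ((n:ℝ) + 1)) 1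
      (g := -Real.log (1 - r) - r)).2 ?_
    · convert this using 2 with n
      · rfl
      push_cast; ring_nf
    · convert hlog using 1
      · rfl
      simp
  have h2 : HasSum (fun n : ℕ => r ^ (1 + n) / (1 + (n:ℝ) + 1)) ((-Real.log (1 - r) - r) / r) := by
    have := h1.div_const r
    convert this using 2 with n
    · rfl
    rw [eq_div_iff (ne_of_gt hr0), div_mul_eq_mul_div]
    congr 1
    · ring
    · ring
  have : phi 1 r = (-Real.log (1 - r) - r) / r := by
    rw [phi, ← h2.tsum_eq]
    norm_num
  rw [this]; ring

section B
variable {r : ℝ} (hr0 : 0 < r) (hr1 : r < 1)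

-- HasSum for the antidiagonal-collapsed series
lemma hasSum_diag (hr0 : 0 < r) (hr1 : r < 1) :
    HasSum (fun n : ℕ => ((n:ℝ) + 1) * (r ^ (n + 2) / ((n:ℝ) + 3)))
      (r ^ 2 / (1 - r) + r + 2 + (2 / r) * Real.log (1 - r)) := by
  have hlog := Real.hasSum_pow_div_log_of_abs_lt_one (x := r) (by rw [abs_of_pos hr0]; exact hr1)
  -- geometric part
  have hg : HasSum (fun n : ℕ => r ^ (n + 2)) (r ^ 2 / (1 - r)) := by
    have := (hasSum_geometric_of_lt_one hr0.le hr1).mul_left (r ^ 2)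
    rw [div_eq_mul_inv]
    convert this using 2 with n
    · rfl
    ring
  -- shifted log part : HasSum (n ↦ r^(n+3)/(n+3)) (-log(1-r) - r - r^2/2)
  have hs : HasSum (fun n : ℕ => r ^ (n + 3) / ((n:ℝ) + 3))
      (-Real.log (1 - r) - (r + r ^ 2 / 2)) := by
    have := (hasSum_nat_add_iff (f := fun n : ℕ => r ^ (n + 1) / ((n:ℝ) + 1)) 2
      (g := -Real.log (1 - r) - (r + r ^ 2 / 2))).2 ?_
    · convert this using 2 with n
      · rfl
      push_cast; ring_nf
    · convert hlog using 1
      · rfl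
      rw [Finset.sum_range_succ, Finset.sum_range_one]
      norm_num
  -- combine
  have hc := hg.sub ((hs.div_const r).mul_left 2)
  convert hc using 1
  · rfl
  · funext n
    have hn3 : ((n:ℝ) + 3) ≠ 0 := by positivity
    field_simp
    ring
  · field_simp
    ring
end B

lemma summable_phi' (hr0 : 0 < r) (hr1 : r < 1) (k : ℕ) :
    Summable (fun i : ℕ => r ^ (k + i) / ((k:ℝ) + i + 1)) := by
  apply Summable.of_nonneg_of_le (fun i => by positivity)
    (fun i => ?_) (((summable_geometric_of_lt_one hr0.le hr1).mul_left (r ^ k)))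
  rw [pow_add]
  apply div_le_self (by positivity)
  have : (0:ℝ) ≤ (k:ℝ) + i := by positivity
  linarith

lemma hasSum_phi_shift (hr0 : 0 < r) (hr1 : r < 1) :
    HasSum (fun k : ℕ => phi (k + 2) r)
      (r ^ 2 / (1 - r) + r + 2 + (2 / r) * Real.log (1 - r)) := by
  classical
  set F : ℕ × ℕ → ℝ := fun p => r ^ ((p.1 + 2) + p.2) / ((((p.1 + 2) : ℕ) : ℝ) + p.2 + 1) with hF
  have hFnn : ∀ p, 0 ≤ F p := fun p => by positivity
  have hfiber : ∀ k : ℕ, HasSum (fun i => F (k, i)) (phi (k + 2) r) :=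
    fun k => (summable_phi' hr0 hr1 (k + 2)).hasSum
  have hsumval : ∀ n : ℕ, ∑ kl ∈ Finset.HasAntidiagonal.antidiagonal n, F kl
      = ((n:ℝ) + 1) * (r ^ (n + 2) / ((n:ℝ) + 3)) := by
    intro n
    have hc : ∀ kl ∈ Finset.HasAntidiagonal.antidiagonal n, F kl = r ^ (n + 2) / ((n:ℝ) + 3) := by
      intro kl hkl
      rw [Finset.HasAntidiagonal.mem_antidiagonal] at hkl
      have h1 : kl.1 + 2 + kl.2 = n + 2 := by omega
      have hcast : (kl.1:ℝ) + kl.2 = (n:ℝ) := by exact_mod_cast congrArg (Nat.cast : ℕ → ℝ) hkl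
      have h2 : ((kl.1 + 2 : ℕ) : ℝ) + kl.2 + 1 = (n:ℝ) + 3 := by push_cast; linarith
      show r ^ (kl.1 + 2 + kl.2) / (((kl.1 + 2 : ℕ) : ℝ) + kl.2 + 1) = r ^ (n + 2) / ((n:ℝ) + 3)
      rw [h1, h2]
    rw [Finset.sum_congr rfl hc, Finset.sum_const, Finset.Nat.card_antidiagonal]
    push_cast
    ring
  have hanti : ∀ n : ℕ, HasSum (fun kl : (Finset.HasAntidiagonal.antidiagonal n : Finset (ℕ × ℕ)) => F kl)
      (((n:ℝ) + 1) * (r ^ (n + 2) / ((n:ℝ) + 3))) := by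
    intro n
    have h := hasSum_fintype (fun kl : (Finset.HasAntidiagonal.antidiagonal n : Finset (ℕ × ℕ)) => F kl)
    rwa [Finset.sum_coe_sort (Finset.HasAntidiagonal.antidiagonal n) F, hsumval n] at h
  have hsummable : Summable (F ∘ Finset.HasAntidiagonal.sigmaAntidiagonalEquivProd) := by
    refine (summable_sigma_of_nonneg (f := F ∘ Finset.HasAntidiagonal.sigmaAntidiagonalEquivProd)
      (fun x => hFnn _)).2 ⟨fun n => (hasSum_fintype _).summable, ?_⟩
    apply ((hasSum_diag hr0 hr1).summable).congr
    intro n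
    rw [← (hanti n).tsum_eq]
    rfl
  have hprod : HasSum F (r ^ 2 / (1 - r) + r + 2 + (2 / r) * Real.log (1 - r)) := by
    rw [← Finset.HasAntidiagonal.sigmaAntidiagonalEquivProd.hasSum_iff]
    exact HasSum.sigma_of_hasSum (hasSum_diag hr0 hr1) (fun n => hanti n) hsummable
  exact hprod.prod_fiberwise hfiber


section C
variable {a r : ℝ}

lemma integral_I1 (ha0 : 0 < a) (ha1 : a < 1) (hr0 : 0 < r) (hr1 : r < 1) :
    ∫ t in (0:ℝ)..1, (a + t * r) / ((1 + a * (t * r)) * (1 - t * r))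
      = ((a - 1) / (a * r)) * Real.log (1 + a * r) - (1 / r) * Real.log (1 - r) := by
  have hden : ∀ t ∈ Icc (0:ℝ) 1, 0 < 1 + a * (t * r) ∧ 0 < 1 - t * r := by
    intro t ht
    obtain ⟨ht0, ht1⟩ := ht
    have hmul : 0 ≤ a * (t * r) := by positivity
    have htr : t * r ≤ r := mul_le_of_le_one_left hr0.le ht1
    constructor
    · linarith
    · linarith
  set H : ℝ → ℝ := fun t => ((a - 1) / (a * r)) * Real.log (1 + a * (t * r))
      - (1 / r) * Real.log (1 - t * r) with hH
  have hderiv : ∀ t ∈ uIcc (0:ℝ) 1,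
      HasDerivAt H ((a + t * r) / ((1 + a * (t * r)) * (1 - t * r))) t := by
    intro t ht
    rw [uIcc_of_le zero_le_one] at ht
    obtain ⟨h1, h2⟩ := hden t ht
    have d1 : HasDerivAt (fun t : ℝ => 1 + a * (t * r)) (a * r) t := by
      simpa using (((hasDerivAt_id t).mul_const r).const_mul a).const_add 1
    have d2 : HasDerivAt (fun t : ℝ => 1 - t * r) (-r) t := by
      simpa using ((hasDerivAt_id t).mul_const r).const_sub 1
    have l1 : HasDerivAt (fun t : ℝ => Real.log (1 + a * (t * r)))
        (a * r / (1 + a * (t * r))) t := by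
      simpa using (d1.log (ne_of_gt h1))
    have l2 : HasDerivAt (fun t : ℝ => Real.log (1 - t * r)) (-r / (1 - t * r)) t := by
      simpa using (d2.log (ne_of_gt h2))
    have := (l1.const_mul ((a - 1) / (a * r))).sub (l2.const_mul (1 / r))
    convert this using 1
    · rfl
    · rfl
    · rfl
    have e1 : (1 + a * (t * r)) ≠ 0 := ne_of_gt h1
    have e2 : (1 - t * r) ≠ 0 := ne_of_gt h2
    have e3 : a ≠ 0 := ne_of_gt ha0
    have e4 : r ≠ 0 := ne_of_gt hr0
    have e5 : 1 + a * t * r ≠ 0 := by rwa [mul_assoc]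
    field_simp
    ring
  have hcont : IntervalIntegrable
      (fun t : ℝ => (a + t * r) / ((1 + a * (t * r)) * (1 - t * r))) MeasureTheory.volume 0 1 := by
    apply ContinuousOn.intervalIntegrable
    rw [uIcc_of_le zero_le_one]
    apply ContinuousOn.div
    · fun_prop
    · fun_prop
    · intro t ht
      obtain ⟨h1, h2⟩ := hden t ht
      positivity
  have := intervalIntegral.integral_eq_sub_of_hasDerivAt hderiv hcont
  rw [this, hH]
  simp
end C

section C2
variable {a r : ℝ}

lemma integral_I2 (ha0 : 0 < a) (ha1 : a < 1) (hr0 : 0 < r) (hr1 : r < 1) :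
    ∫ t in (0:ℝ)..1, (1 - a ^ 2) / ((1 + a * (t * r)) ^ 2 * (1 - t * r))
      = (1 - a) / ((1 + a) * r) * (Real.log (1 + a * r) - Real.log (1 - r))
        + a * (1 - a) / (1 + a * r) := by
  have hden : ∀ t ∈ Icc (0:ℝ) 1, 0 < 1 + a * (t * r) ∧ 0 < 1 - t * r := by
    intro t ht
    obtain ⟨ht0, ht1⟩ := ht
    have hmul : 0 ≤ a * (t * r) := by positivity
    have htr : t * r ≤ r := mul_le_of_le_one_left hr0.le ht1
    exact ⟨by linarith, by linarith⟩
  have h1a : (0:ℝ) < 1 + a := by linarith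
  set H : ℝ → ℝ := fun t => (1 - a ^ 2) / r * (Real.log (1 + a * (t * r)) / (1 + a) ^ 2
      - Real.log (1 - t * r) / (1 + a) ^ 2) - (1 - a ^ 2) / ((1 + a) * (1 + a * (t * r))) / r
      with hH
  have hderiv : ∀ t ∈ uIcc (0:ℝ) 1,
      HasDerivAt H ((1 - a ^ 2) / ((1 + a * (t * r)) ^ 2 * (1 - t * r))) t := by
    intro t ht
    rw [uIcc_of_le zero_le_one] at ht
    obtain ⟨h1, h2⟩ := hden t ht
    have d1 : HasDerivAt (fun t : ℝ => 1 + a * (t * r)) (a * r) t := by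
      simpa using (((hasDerivAt_id t).mul_const r).const_mul a).const_add 1
    have d2 : HasDerivAt (fun t : ℝ => 1 - t * r) (-r) t := by
      simpa using ((hasDerivAt_id t).mul_const r).const_sub 1
    have l1 : HasDerivAt (fun t : ℝ => Real.log (1 + a * (t * r)))
        (a * r / (1 + a * (t * r))) t := by
      simpa using (d1.log (ne_of_gt h1))
    have l2 : HasDerivAt (fun t : ℝ => Real.log (1 - t * r)) (-r / (1 - t * r)) t := by
      simpa using (d2.log (ne_of_gt h2))
    have inv1 : HasDerivAt (fun t : ℝ => (1 - a ^ 2) / ((1 + a) * (1 + a * (t * r))))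
        (-((1 - a ^ 2) * ((1 + a) * (a * r) / ((1 + a) * (1 + a * (t * r))) ^ 2))) t := by
      have hd : HasDerivAt (fun t : ℝ => (1 + a) * (1 + a * (t * r))) ((1 + a) * (a * r)) t :=
        d1.const_mul (1 + a)
      have hne : (1 + a) * (1 + a * (t * r)) ≠ 0 := by positivity
      simpa [div_eq_mul_inv] using ((hd.inv hne).const_mul (1 - a ^ 2))
    have := ((((l1.div_const ((1 + a) ^ 2)).sub (l2.div_const ((1 + a) ^ 2))).const_mul
      ((1 - a ^ 2) / r)).sub (inv1.div_const r))
    convert this using 1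
    · rfl
    · rfl
    · rfl
    have e1 : (1 + a * (t * r)) ≠ 0 := ne_of_gt h1
    have e2 : (1 - t * r) ≠ 0 := ne_of_gt h2
    have e3 : (1 + a) ≠ 0 := ne_of_gt h1a
    have e4 : r ≠ 0 := ne_of_gt hr0
    have e5 : 1 + a * t * r ≠ 0 := by rwa [mul_assoc]
    field_simp
    ring
  have hcont : IntervalIntegrable
      (fun t : ℝ => (1 - a ^ 2) / ((1 + a * (t * r)) ^ 2 * (1 - t * r)))
      MeasureTheory.volume 0 1 := by
    apply ContinuousOn.intervalIntegrable
    rw [uIcc_of_le zero_le_one]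
    apply ContinuousOn.div
    · fun_prop
    · fun_prop
    · intro t ht
      obtain ⟨h1, h2⟩ := hden t ht
      positivity
  have hfin := intervalIntegral.integral_eq_sub_of_hasDerivAt hderiv hcont
  rw [hfin, hH]
  simp only [mul_zero, zero_mul, add_zero, Real.log_one, mul_one, sub_zero, zero_sub, zero_div]
  have e3 : (1 + a * r) ≠ 0 := by positivity
  field_simp
  ring
end C2

section D
variable {a r : ℝ}

lemma cesaro_fa (ha0 : 0 < a) (ha1 : a < 1) (hr0 : 0 < r) (hr1 : r < 1) :
    cesaro (fun z => ((a:ℂ) + z) / (1 + (a:ℂ) * z)) (r:ℂ)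
      = ((∫ t in (0:ℝ)..1, (a + t * r) / ((1 + a * (t * r)) * (1 - t * r)) : ℝ) : ℂ) := by
  rw [cesaro, ← intervalIntegral.integral_ofReal]
  congr 1
  funext t
  push_cast
  rw [div_div]

lemma deriv_fa (w : ℂ) (hw : 1 + (a:ℂ) * w ≠ 0) :
    deriv (fun z => ((a:ℂ) + z) / (1 + (a:ℂ) * z)) w = (1 - (a:ℂ) ^ 2) / (1 + (a:ℂ) * w) ^ 2 := by
  have hu : HasDerivAt (fun z : ℂ => (a:ℂ) + z) 1 w := (hasDerivAt_id w).const_add (a:ℂ)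
  have hv : HasDerivAt (fun z : ℂ => 1 + (a:ℂ) * z) (a:ℂ) w := by
    simpa using ((hasDerivAt_id w).const_mul (a:ℂ)).const_add 1
  have := (hu.div hv hw).deriv
  rw [show (fun z => ((a:ℂ) + z) / (1 + (a:ℂ) * z)) = ((fun z => (a:ℂ) + z) / fun z => 1 + (a:ℂ) * z) from rfl, this]
  rw [div_eq_div_iff (pow_ne_zero 2 hw) (pow_ne_zero 2 hw)]
  ring

lemma cesaro_fa' (ha0 : 0 < a) (ha1 : a < 1) (hr0 : 0 < r) (hr1 : r < 1) :
    cesaro (deriv (fun z => ((a:ℂ) + z) / (1 + (a:ℂ) * z))) (r:ℂ)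
      = ((∫ t in (0:ℝ)..1, (1 - a ^ 2) / ((1 + a * (t * r)) ^ 2 * (1 - t * r)) : ℝ) : ℂ) := by
  rw [cesaro, ← intervalIntegral.integral_ofReal]
  apply intervalIntegral.integral_congr
  intro t ht
  rw [uIcc_of_le zero_le_one] at ht
  obtain ⟨ht0, ht1⟩ := ht
  have hpos : 0 < 1 + a * (t * r) := by
    have : 0 ≤ a * (t * r) := by positivity
    linarith
  have hw : 1 + (a:ℂ) * ((t:ℂ) * (r:ℂ)) ≠ 0 := by
    have : ((1 + a * (t * r) : ℝ) : ℂ) ≠ 0 := by exact_mod_cast ne_of_gt hpos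
    push_cast at this ⊢
    convert this using 2
  show deriv (fun z => ((a:ℂ) + z) / (1 + (a:ℂ) * z)) ((t:ℂ) * (r:ℂ)) / (1 - (t:ℂ) * (r:ℂ)) = _
  rw [deriv_fa _ hw]
  push_cast
  rw [div_div]
end D


noncomputable def Froot (x : ℝ) : ℝ :=
  -(1/x) * Real.log (1 + x)
    + ((-x - Real.log (1 - x)) / (2 * x)) *
      (-(1/x) * Real.log (1 - x) + (1/x) * Real.log (1 + x) + 2 / (1 + x))
    + 2 * (x ^ 2 / (1 - x) + x + 2 + (2 / x) * Real.log (1 - x))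

lemma Froot_continuousOn : ContinuousOn Froot (Ioo (0:ℝ) 1) := by
  intro x hx
  obtain ⟨hx0, hx1⟩ := hx
  apply ContinuousAt.continuousWithinAt
  have c1 : ContinuousAt (fun x : ℝ => Real.log (1 + x)) x :=
    (Real.continuousAt_log (by linarith)).comp (by fun_prop)
  have c2 : ContinuousAt (fun x : ℝ => Real.log (1 - x)) x :=
    (Real.continuousAt_log (by intro h; nlinarith [h])).comp (by fun_prop)
  have hx0' : x ≠ 0 := ne_of_gt hx0
  have h2x : (2:ℝ) * x ≠ 0 := by positivity
  have h1x : (1:ℝ) + x ≠ 0 := by positivity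
  have h1mx : (1:ℝ) - x ≠ 0 := by intro h; nlinarith [h]
  unfold Froot
  apply ContinuousAt.add
  apply ContinuousAt.add
  · exact (((continuousAt_const.div continuousAt_id hx0').neg).mul c1)
  · apply ContinuousAt.mul
    · exact ((continuousAt_id.neg.sub c2).div (by fun_prop) h2x)
    · apply ContinuousAt.add
      apply ContinuousAt.add
      · exact ((continuousAt_const.div continuousAt_id hx0').neg).mul c2
      · exact (continuousAt_const.div continuousAt_id hx0').mul c1
      · exact continuousAt_const.div (by fun_prop) h1x
  · apply continuousAt_const.mul
    apply ContinuousAt.add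
    apply ContinuousAt.add
    apply ContinuousAt.add
    · exact ContinuousAt.div (by fun_prop) (by fun_prop) h1mx
    · exact continuousAt_id
    · exact continuousAt_const
    · exact (continuousAt_const.div continuousAt_id hx0').mul c2

lemma log_one_sub_ge {x : ℝ} (hx0 : 0 < x) (hx1 : x < 1) :
    -2 / Real.sqrt (1 - x) ≤ Real.log (1 - x) := by
  have h1 : (0:ℝ) < 1 - x := by linarith
  have hs0 : 0 < Real.sqrt (1 - x) := Real.sqrt_pos.2 h1
  set s := Real.sqrt (1 - x) with hs
  have h2 : -Real.log (1 - x) = 2 * Real.log s⁻¹ := by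
    rw [← Real.log_inv, ← Real.sqrt_inv, Real.log_sqrt (by positivity)]
    ring
  have h3 : Real.log s⁻¹ ≤ s⁻¹ - 1 := Real.log_le_sub_one_of_pos (by positivity)
  have h4 : -Real.log (1 - x) ≤ 2 * s⁻¹ := by rw [h2]; linarith
  rw [neg_div]
  have : (2:ℝ) / s = 2 * s⁻¹ := by rw [div_eq_mul_inv]
  linarith [this ▸ h4]

lemma Froot_pos_near_one {x : ℝ} (hx0 : 0.97 ≤ x) (hx1 : x < 1) : 0 < Froot x := by
  have hx0' : (0:ℝ) < x := by linarith
  have h1mx : (0:ℝ) < 1 - x := by linarith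
  set s := Real.sqrt (1 - x) with hs
  have hs0 : 0 < s := Real.sqrt_pos.2 h1mx
  have hs2 : s ^ 2 = 1 - x := Real.sq_sqrt h1mx.le
  have hsle : s ≤ 0.18 := by nlinarith [hs2]
  -- term 1 ≥ -1
  have hlog1 : Real.log (1 + x) ≤ x := by
    have := Real.log_le_sub_one_of_pos (x := 1 + x) (by linarith)
    linarith
  have ht1 : -1 ≤ -(1/x) * Real.log (1 + x) := by
    rw [neg_mul, neg_le_neg_iff]
    rw [div_mul_eq_mul_div, one_mul, div_le_one hx0']
    exact hlog1
  -- term 2 ≥ 0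
  have hlogm : Real.log (1 - x) ≤ -x := by
    have := Real.log_le_sub_one_of_pos (x := 1 - x) h1mx
    linarith
  have hlogm0 : Real.log (1 - x) < 0 := Real.log_neg (by linarith) (by linarith)
  have ht2 : 0 ≤ ((-x - Real.log (1 - x)) / (2 * x)) *
      (-(1/x) * Real.log (1 - x) + (1/x) * Real.log (1 + x) + 2 / (1 + x)) := by
    apply mul_nonneg
    · apply div_nonneg (by linarith) (by linarith)
    · have l1 : 0 ≤ -(1/x) * Real.log (1 - x) := by
        have h := mul_nonneg (by positivity : (0:ℝ) ≤ 1/x) (neg_nonneg.2 hlogm0.le)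
        have heq : -(1/x) * Real.log (1 - x) = (1/x) * (-Real.log (1 - x)) := by ring
        rw [heq]; exact h
      have l2 : 0 ≤ (1/x) * Real.log (1 + x) := by
        apply mul_nonneg (by positivity) (Real.log_nonneg (by linarith))
      have l3 : (0:ℝ) ≤ 2 / (1 + x) := by positivity
      linarith
  -- term 3
  have hlog2 : -2 / s ≤ Real.log (1 - x) := log_one_sub_ge hx0' hx1
  have ht3 : 2 * (x ^ 2 / (s ^ 2) + x + 2 + (2 / x) * (-2 / s))
      ≤ 2 * (x ^ 2 / (1 - x) + x + 2 + (2 / x) * Real.log (1 - x)) := by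
    rw [hs2]
    have : (2 / x) * (-2 / s) ≤ (2 / x) * Real.log (1 - x) :=
      mul_le_mul_of_nonneg_left hlog2 (by positivity)
    linarith
  have hP : 0 < x * s ^ 2 * (3 + 2 * x) + 2 * x ^ 3 - 8 * s := by
    have hx3 : (0.91:ℝ) ≤ x ^ 3 := by nlinarith
    have : (0:ℝ) ≤ x * s ^ 2 * (3 + 2 * x) := by positivity
    nlinarith
  have hE : 0 < -1 + 2 * (x ^ 2 / (s ^ 2) + x + 2 + (2 / x) * (-2 / s)) := by
    have heq : -1 + 2 * (x ^ 2 / (s ^ 2) + x + 2 + (2 / x) * (-2 / s))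
        = (x * s ^ 2 * (3 + 2 * x) + 2 * x ^ 3 - 8 * s) / (x * s ^ 2) := by
      field_simp
      ring
    rw [heq]
    positivity
  unfold Froot
  linarith


noncomputable def PhiN (N : ℕ) (r a : ℝ) : ℝ :=
  -(1/(a*r)) * Real.log (1 + a*r)
    + ((Real.log (1 + a*r) - Real.log (1 - r))/((1+a)*r) + a/(1+a*r)) * phi 1 r
    + (1+a) * ∑ k ∈ Finset.range N, a^(k+1) * phi (k+2) r

set_option maxHeartbeats 2000000 in
theorem stmt1 (r₁ : ℝ) (hr₁ : r₁ ∈ Ioo (0:ℝ) 1)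
    (hroot : -(1/r₁) * Real.log (1 + r₁)
        + ((-r₁ - Real.log (1 - r₁)) / (2 * r₁)) *
          (-(1/r₁) * Real.log (1 - r₁) + (1/r₁) * Real.log (1 + r₁) + 2 / (1 + r₁))
        + 2 * (r₁ ^ 2 / (1 - r₁) + r₁ + 2 + (2 / r₁) * Real.log (1 - r₁)) = 0)
    (huniq : ∀ r ∈ Ioo (0:ℝ) 1,
        -(1/r) * Real.log (1 + r)
        + ((-r - Real.log (1 - r)) / (2 * r)) *
          (-(1/r) * Real.log (1 - r) + (1/r) * Real.log (1 + r) + 2 / (1 + r))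
        + 2 * (r ^ 2 / (1 - r) + r + 2 + (2 / r) * Real.log (1 - r)) = 0 → r = r₁) :
    ∀ r : ℝ, r₁ < r → r < 1 →
      ∃ a : ℝ, 0 < a ∧ a < 1 ∧
        (1 / r) * Real.log (1 / (1 - r)) <
          ‖cesaro (fun z => ((a:ℂ) + z) / (1 + (a:ℂ) * z)) (r:ℂ)‖
          + ‖cesaro (deriv (fun z => ((a:ℂ) + z) / (1 + (a:ℂ) * z))) (r:ℂ)‖ * phi 1 r
          + ∑' k : ℕ, |(1 - a ^ 2) * (-a) ^ (k + 1)| * phi (k + 2) r := by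
  intro r hrr₁ hr1
  have hr0 : 0 < r := lt_trans hr₁.1 hrr₁
  -- Step 1 : Froot r > 0
  have hFr : 0 < Froot r := by
    rcases lt_trichotomy (Froot r) 0 with hneg | hzero | hpos
    · exfalso
      by_cases hbig : 0.97 ≤ r
      · exact absurd (Froot_pos_near_one hbig hr1) (not_lt.2 hneg.le)
      · push_neg at hbig
        have hsub : Icc r 0.97 ⊆ Ioo (0:ℝ) 1 := by
          intro y hy
          exact ⟨lt_of_lt_of_le hr0 hy.1, lt_of_le_of_lt hy.2 (by norm_num)⟩
        have hcont : ContinuousOn Froot (Icc r 0.97) := Froot_continuousOn.mono hsub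
        have hF97 : 0 < Froot 0.97 := Froot_pos_near_one le_rfl (by norm_num)
        have hIVT := intermediate_value_Icc hbig.le hcont
        have h0mem : (0:ℝ) ∈ Icc (Froot r) (Froot 0.97) := ⟨hneg.le, hF97.le⟩
        obtain ⟨c, hc, hc0⟩ := hIVT h0mem
        have hcIoo : c ∈ Ioo (0:ℝ) 1 := hsub hc
        have hceq := huniq c hcIoo (by rw [← hc0]; rfl)
        have hclt : r₁ < c := lt_of_lt_of_le hrr₁ hc.1
        linarith
    · exfalso
      have := huniq r ⟨hr0, hr1⟩ (by rw [← hzero]; rfl)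
      rw [this] at hrr₁
      exact lt_irrefl _ hrr₁
    · exact hpos
  -- Step 2 : choose N, then a
  have hsum := hasSum_phi_shift hr0 hr1
  obtain ⟨N, hN⟩ : ∃ N : ℕ,
      (r ^ 2 / (1 - r) + r + 2 + (2 / r) * Real.log (1 - r)) - Froot r / 8
        < ∑ k ∈ Finset.range N, phi (k + 2) r :=
    (hsum.tendsto_sum_nat.eventually (eventually_gt_nhds (by linarith))).exists
  have hΦ1 : PhiN N r 1 = Froot r - 2 * ((r ^ 2 / (1 - r) + r + 2 + (2 / r) * Real.log (1 - r))
      - ∑ k ∈ Finset.range N, phi (k + 2) r) := by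
    have hphi1 := phi_one_eq hr0 hr1
    have hsimp : ∑ k ∈ Finset.range N, (1:ℝ)^(k+1) * phi (k+2) r
        = ∑ k ∈ Finset.range N, phi (k+2) r := by
      simp
    unfold PhiN
    rw [hsimp, hphi1]
    unfold Froot
    have h1r : (1:ℝ) + r ≠ 0 := by positivity
    have h1mr : (1:ℝ) - r ≠ 0 := by intro h; nlinarith [h]
    field_simp
    ring
  have hΦ1pos : 0 < PhiN N r 1 := by
    rw [hΦ1]
    linarith
  have hΦcont : ContinuousAt (PhiN N r) 1 := by
    have c1 : ContinuousAt (fun a : ℝ => Real.log (1 + a*r)) 1 := by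
      apply (Real.continuousAt_log (by norm_num; nlinarith)).comp
      fun_prop
    have d1 : ContinuousAt (fun a : ℝ => -(1/(a*r)) * Real.log (1 + a*r)) 1 := by
      have h : ContinuousAt (fun a : ℝ => 1/(a*r)) 1 := by
        apply ContinuousAt.div continuousAt_const (by fun_prop)
        norm_num [hr0.ne']
      exact h.neg.mul c1
    have d2 : ContinuousAt (fun a : ℝ =>
        ((Real.log (1 + a*r) - Real.log (1 - r))/((1+a)*r) + a/(1+a*r)) * phi 1 r) 1 := by
      apply ContinuousAt.mul _ continuousAt_const
      apply ContinuousAt.add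
      · apply ContinuousAt.div (c1.sub continuousAt_const) (by fun_prop)
        norm_num [hr0.ne']
      · apply ContinuousAt.div continuousAt_id (by fun_prop)
        norm_num; nlinarith
    have d3 : ContinuousAt (fun a : ℝ => (1+a) * ∑ k ∈ Finset.range N,
        a^(k+1) * phi (k+2) r) 1 := by fun_prop
    exact (d1.add d2).add d3
  have hev : ∀ᶠ a in nhdsWithin 1 (Iio (1:ℝ)), 0 < PhiN N r a ∧ a ∈ Ioo (1/2 : ℝ) 1 := by
    have h1 : ∀ᶠ a in nhdsWithin 1 (Iio (1:ℝ)), 0 < PhiN N r a :=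
      nhdsWithin_le_nhds (hΦcont.tendsto.eventually (eventually_gt_nhds hΦ1pos))
    have h2 : ∀ᶠ a in nhdsWithin 1 (Iio (1:ℝ)), a ∈ Ioo (1/2 : ℝ) 1 :=
      Ioo_mem_nhdsLT_of_mem (by norm_num : (1:ℝ) ∈ Ioc (1/2:ℝ) 1)
    exact h1.and h2
  obtain ⟨a, hΦa, ha12, ha1⟩ := hev.exists
  have ha0 : 0 < a := lt_trans (by norm_num) ha12
  refine ⟨a, ha0, ha1, ?_⟩
  -- Step 3 : the chain of inequalities
  have ha2 : 0 < 1 - a ^ 2 := by nlinarith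
  have h1ar : (0:ℝ) < 1 + a * r := by positivity
  have h1mr : (0:ℝ) < 1 - r := by linarith
  have hn1 : ((a - 1) / (a * r)) * Real.log (1 + a * r) - (1 / r) * Real.log (1 - r)
      ≤ ‖cesaro (fun z => ((a:ℂ) + z) / (1 + (a:ℂ) * z)) (r:ℂ)‖ := by
    rw [cesaro_fa ha0 ha1 hr0 hr1, Complex.norm_real, integral_I1 ha0 ha1 hr0 hr1]
    exact le_abs_self _
  have hn2 : ((1 - a) / ((1 + a) * r) * (Real.log (1 + a * r) - Real.log (1 - r))
        + a * (1 - a) / (1 + a * r)) * phi 1 r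
      ≤ ‖cesaro (deriv (fun z => ((a:ℂ) + z) / (1 + (a:ℂ) * z))) (r:ℂ)‖ * phi 1 r := by
    apply mul_le_mul_of_nonneg_right _ (phi_nonneg hr0.le 1)
    rw [cesaro_fa' ha0 ha1 hr0 hr1, Complex.norm_real, integral_I2 ha0 ha1 hr0 hr1]
    exact le_abs_self _
  have hterm : ∀ k : ℕ, |(1 - a ^ 2) * (-a) ^ (k + 1)| * phi (k + 2) r
      = (1 - a ^ 2) * a ^ (k + 1) * phi (k + 2) r := by
    intro k
    rw [abs_mul, abs_pow, abs_neg, abs_of_pos ha0, abs_of_pos ha2]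
  have hsummable3 : Summable (fun k : ℕ => (1 - a ^ 2) * a ^ (k + 1) * phi (k + 2) r) := by
    apply Summable.of_nonneg_of_le
      (fun k => mul_nonneg (by positivity) (phi_nonneg hr0.le (k+2))) (fun k => ?_)
      (((summable_geometric_of_lt_one ha0.le ha1).mul_left ((1 - a^2) * a / (1 - r))))
    have h1 : phi (k + 2) r ≤ 1 / (1 - r) := by
      calc phi (k+2) r ≤ r ^ (k+2) / (1 - r) := phi_le hr0.le hr1 (k+2)
        _ ≤ 1 / (1 - r) := by
            gcongr
            exact pow_le_one₀ hr0.le hr1.le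
    calc (1 - a ^ 2) * a ^ (k + 1) * phi (k + 2) r
        ≤ (1 - a ^ 2) * a ^ (k + 1) * (1 / (1 - r)) := by
          apply mul_le_mul_of_nonneg_left h1 (by positivity)
      _ = (1 - a^2) * a / (1 - r) * a ^ k := by rw [pow_succ]; ring
  have hn3 : (1 - a ^ 2) * ∑ k ∈ Finset.range N, a ^ (k + 1) * phi (k + 2) r
      ≤ ∑' k : ℕ, |(1 - a ^ 2) * (-a) ^ (k + 1)| * phi (k + 2) r := by
    rw [tsum_congr hterm]
    rw [Finset.mul_sum]
    have := Summable.sum_le_tsum (Finset.range N)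
      (fun k _ => mul_nonneg (by positivity) (phi_nonneg hr0.le (k+2))) hsummable3
    calc ∑ k ∈ Finset.range N, (1 - a^2) * (a ^ (k + 1) * phi (k + 2) r)
        = ∑ k ∈ Finset.range N, (1 - a^2) * a ^ (k + 1) * phi (k + 2) r := by
          apply Finset.sum_congr rfl; intro k _; ring
      _ ≤ _ := this
  have hM : (1 / r) * Real.log (1 / (1 - r)) = -(1/r) * Real.log (1 - r) := by
    rw [one_div (1 - r), Real.log_inv]
    ring
  have hkey : (((a - 1) / (a * r)) * Real.log (1 + a * r) - (1 / r) * Real.log (1 - r))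
      + ((1 - a) / ((1 + a) * r) * (Real.log (1 + a * r) - Real.log (1 - r))
          + a * (1 - a) / (1 + a * r)) * phi 1 r
      + (1 - a ^ 2) * ∑ k ∈ Finset.range N, a ^ (k + 1) * phi (k + 2) r
      = (1 / r) * Real.log (1 / (1 - r)) + (1 - a) * PhiN N r a := by
    rw [hM]
    unfold PhiN
    have e1 : a * r ≠ 0 := by positivity
    have e2 : (1 + a) * r ≠ 0 := by positivity
    have e3 : (1 + a * r) ≠ 0 := ne_of_gt h1ar
    field_simp
    ring
  have hfinal : (1 / r) * Real.log (1 / (1 - r))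
      < (1 / r) * Real.log (1 / (1 - r)) + (1 - a) * PhiN N r a := by
    have : 0 < (1 - a) * PhiN N r a := mul_pos (by linarith) hΦa
    linarith
  rw [← hkey] at hfinal
  calc (1 / r) * Real.log (1 / (1 - r)) < _ := hfinal
    _ ≤ _ := by
        apply add_le_add
        apply add_le_add hn1 hn2
        exact hn3
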